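/- arXiv:2204.09062 — 5 statements merged into one kernel-verified Lean document; each statement's English description precedes it below -/
import Mathlib

section
/- If the Stokes matrices are M_{2i} = [[1, m_{2i}],[0,1]] and M_{2i-1} = [[1,0],[m_{2i-1},1]], B = [[0,-i],[-i,0]], and for all j the cyclic constraint B·M_{j+4}·M_{j+3}·M_{j+2}·M_{j+1}·M_j = I holds (indices mod 10), then the Stokes multipliers satisfy m_{j+3} = i(1 + m_j m_{j+1}) and m_{j+5} = m_j for all j. -/
open Matrix Complex

private lemma stokes_even_case (a b c d e : ℂ)
    (h : !![(0:ℂ),-I;-I,0] * !![1,e;0,1] * !![1,0;d,1] * !![1,c;0,1] * !![1,0;b,1] * !![1,a;0,1] = 1) :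
    d = I*(1+a*b) ∧ a + c + a*b*c = I := by
  have h00 := congrFun (congrFun h 0) 0
  have h01 := congrFun (congrFun h 0) 1
  simp [Matrix.mul_apply, Fin.sum_univ_succ] at h00 h01
  have hd : d = I*(1+a*b) := by
    linear_combination I*(1+a*b)*h00 - I*b*h01 + d*Complex.I_sq
  refine ⟨hd, ?_⟩
  linear_combination I*c*hd + h01 - a*h00 + (a*c*b + c)*Complex.I_sq

private lemma stokes_odd_case (a b c d e : ℂ)
    (h : !![(0:ℂ),-I;-I,0] * !![1,0;e,1] * !![1,d;0,1] * !![1,0;c,1] * !![1,b;0,1] * !![1,0;a,1] = 1) :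
    d = I*(1+a*b) ∧ a + c + a*b*c = I := by
  have h10 := congrFun (congrFun h 1) 0
  have h11 := congrFun (congrFun h 1) 1
  simp [Matrix.mul_apply, Fin.sum_univ_succ] at h10 h11
  have hd : d = I*(1+a*b) := by
    linear_combination I*(1+a*b)*h11 - I*b*h10 + d*Complex.I_sq
  refine ⟨hd, ?_⟩
  linear_combination I*c*hd + h10 - a*h11 + (a*c*b + c)*Complex.I_sq

/-- The cyclic monodromy constraint `B · M_{j+4} · M_{j+3} · M_{j+2} · M_{j+1} · M_j = I`
(indices mod 10) on the ten Stokes matrices, even-indexed upper triangular unipotent and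
odd-indexed lower triangular unipotent, with `B = [[0,-i],[-i,0]]`, implies the relations
`m_{j+3} = i(1 + m_j m_{j+1})` and `m_{j+5} = m_j` on the Stokes multipliers. -/
theorem stokes_multiplier_relations (m : ZMod 10 → ℂ)
    (M : ZMod 10 → Matrix (Fin 2) (Fin 2) ℂ)
    (hM : ∀ j : ZMod 10, M j = if j.val % 2 = 0 then !![1, m j; 0, 1] else !![1, 0; m j, 1])
    (B : Matrix (Fin 2) (Fin 2) ℂ) (hB : B = !![0, -I; -I, 0])
    (hmon : ∀ j : ZMod 10, B * M (j + 4) * M (j + 3) * M (j + 2) * M (j + 1) * M j = 1) :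
    ∀ j : ZMod 10, m (j + 3) = I * (1 + m j * m (j + 1)) ∧ m (j + 5) = m j := by
  have p1 : ∀ j : ZMod 10, (j+1).val % 2 = (j.val + 1) % 2 := by decide
  have p2 : ∀ j : ZMod 10, (j+2).val % 2 = j.val % 2 := by decide
  have p3 : ∀ j : ZMod 10, (j+3).val % 2 = (j.val + 1) % 2 := by decide
  have p4 : ∀ j : ZMod 10, (j+4).val % 2 = j.val % 2 := by decide
  have key : ∀ j : ZMod 10, m (j + 3) = I*(1 + m j * m (j + 1)) ∧
      m j + m (j + 2) + m j * m (j + 1) * m (j + 2) = I := by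
    intro j
    have h := hmon j
    rw [hB, hM j, hM (j+1), hM (j+2), hM (j+3), hM (j+4), p1, p2, p3, p4] at h
    rcases Nat.mod_two_eq_zero_or_one j.val with hp | hp
    · have q1 : (j.val + 1) % 2 = 1 := by omega
      rw [hp, q1] at h
      simp only [reduceIte] at h
      exact stokes_even_case _ _ _ _ _ h
    · have q1 : (j.val + 1) % 2 = 0 := by omega
      rw [hp, q1] at h
      simp only [reduceIte] at h
      exact stokes_odd_case _ _ _ _ _ h
  intro j
  obtain ⟨h1, h2⟩ := key j
  obtain ⟨h1', -⟩ := key (j+2)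
  have e1 : j+2+3 = j+5 := by ring
  have e2 : j+2+1 = j+3 := by ring
  rw [e1, e2] at h1'
  refine ⟨h1, ?_⟩
  linear_combination h1' + I * (m (j+2)) * h1 - h2 +
    (m (j+2)) * (1 + m j * m (j+1)) * Complex.I_sq
end

section
/- Any solution (m_1,...,m_5) ∈ ℂ^5 of the recursion m_{j+3} = i(1 + m_j m_{j+1}) (indices mod 5) satisfies the cubic monodromy-manifold relation m_j m_{j+1} m_{j+2} + m_j + m_{j+2} = i for every j. -/
open Complex

/-- Any solution of the cyclic recursion `m_{j+3} = i(1 + m_j m_{j+1})` (indices mod 5)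
lies on the cubic monodromy manifold: `m_j m_{j+1} m_{j+2} + m_j + m_{j+2} = i` for all `j`. -/
theorem monodromy_manifold_cubic (m : ZMod 5 → ℂ)
    (hrec : ∀ j : ZMod 5, m (j + 3) = I * (1 + m j * m (j + 1))) :
    ∀ j : ZMod 5, m j * m (j + 1) * m (j + 2) + m j + m (j + 2) = I := by
  intro j
  have h0 := hrec j
  have h1 := hrec (j + 1)
  have h2 := hrec (j + 2)
  have h3 := hrec (j + 3)
  have k1 : j + 1 + 3 = j + 4 := by rw [add_assoc, show (1 + 3 : ZMod 5) = 4 from rfl]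
  have k2 : j + 1 + 1 = j + 2 := by rw [add_assoc, show (1 + 1 : ZMod 5) = 2 from rfl]
  have k3 : j + 2 + 3 = j := by rw [add_assoc, show (2 + 3 : ZMod 5) = 0 from rfl, add_zero]
  have k4 : j + 2 + 1 = j + 3 := by rw [add_assoc, show (2 + 1 : ZMod 5) = 3 from rfl]
  have k5 : j + 3 + 3 = j + 1 := by rw [add_assoc, show (3 + 3 : ZMod 5) = 1 from rfl]
  have k6 : j + 3 + 1 = j + 4 := by rw [add_assoc, show (3 + 1 : ZMod 5) = 4 from rfl]
  rw [k1, k2] at h1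
  rw [k3, k4] at h2
  rw [k5, k6] at h3
  rcases eq_or_ne (m (j + 1)) 0 with hb | hb
  · rw [hb] at h0 ⊢
    linear_combination h2 + I * m (j + 2) * h0 + m (j + 2) * Complex.I_sq
  · rw [h0, h1] at h3
    have key : I * m (j + 1) *
        (m j * m (j + 1) * m (j + 2) + m j + m (j + 2) - I) = 0 := by
      linear_combination h3 + (I + I * m j * m (j + 1) + I * m (j + 1) * m (j + 2) +
          I * m j * m (j + 1) ^ 2 * m (j + 2) - m (j + 1)) * Complex.I_sq
    rcases mul_eq_zero.mp key with h | h
    · exact absurd h (mul_ne_zero I_ne_zero hb)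
    · linear_combination h
end

section
/- Given m_1, m_2 ∈ ℂ with 1 + m_1 m_2 ≠ 0, the unique solution of the cyclic recursion m_{j+3} = i(1 + m_j m_{j+1}) (mod 5) extending (m_1, m_2) is (m_1, m_2, (i - m_1)/(1 + m_1 m_2), i(1 + m_1 m_2), (i - m_2)/(1 + m_1 m_2)). -/
open Complex

/-- With `b = m₄ = i(1 + m₁m₂)`, this turns the recursions for `m₁` and `m₂` into
`m₁ = i - m₃(1 + m₁m₂)` and `m₂ = i - m₀(1 + m₁m₂)`, which are solved by division. -/
theorem mul_eq_sub_of_sq_eq_neg_one {R : Type*} [CommRing R] {i a b c p : R} (hi : i ^ 2 = -1)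
    (hb : b = i * p) (ha : a = i * (1 + c * b)) : c * p = i - a := by
  subst hb ha
  linear_combination (c * p) * hi

/-- If `1 + m₁m₂ ≠ 0`, the cyclic recursion `m_{j+3} = i(1 + m_j m_{j+1})` (mod 5) uniquely
determines the remaining multipliers:
`m₃ = (i - m₁)/(1 + m₁m₂)`, `m₄ = i(1 + m₁m₂)`, `m₅ = (i - m₂)/(1 + m₁m₂)`
(with `m₅ = m 0` in the mod-5 labelling). -/
theorem stokes_multipliers_generic (m : ZMod 5 → ℂ)
    (hrec : ∀ j : ZMod 5, m (j + 3) = I * (1 + m j * m (j + 1)))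
    (h : 1 + m 1 * m 2 ≠ 0) :
    m 3 = (I - m 1) / (1 + m 1 * m 2) ∧
    m 4 = I * (1 + m 1 * m 2) ∧
    m 0 = (I - m 2) / (1 + m 1 * m 2) := by
  have h4 : m 4 = I * (1 + m 1 * m 2) := hrec 1
  have h1 : m 1 = I * (1 + m 3 * m 4) := hrec 3
  have h2 : m 2 = I * (1 + m 0 * m 4) := by rw [mul_comm (m 0)]; exact hrec 4
  refine ⟨?_, h4, ?_⟩
  · rw [eq_div_iff h]
    exact mul_eq_sub_of_sq_eq_neg_one I_sq h4 h1
  · rw [eq_div_iff h]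
    exact mul_eq_sub_of_sq_eq_neg_one I_sq h4 h2
end

section
/- If m_1 m_2 = -1, then the solutions of the cyclic recursion m_{j+3} = i(1 + m_j m_{j+1}) (mod 5) are exactly the tuples (i, i, m_3, 0, i - m_3) with m_3 ∈ ℂ arbitrary (up to the cyclic labelling starting at the position where m_1 m_2 = -1). -/
open Complex

/-- If `m₁ m₂ = -1`, then the cyclic recursion `m_{j+3} = i(1 + m_j m_{j+1})` (mod 5)
forces the solution to be of the form `(i, i, m₃, 0, i - m₃)` with `m₃` arbitrary:
i.e. `m₁ = i`, `m₂ = i`, `m₄ = 0` and `m₅ = i - m₃` (with `m₅ = m 0`). -/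
theorem stokes_multipliers_degenerate (m : ZMod 5 → ℂ)
    (hrec : ∀ j : ZMod 5, m (j + 3) = I * (1 + m j * m (j + 1)))
    (h : m 1 * m 2 = -1) :
    m 1 = I ∧ m 2 = I ∧ m 4 = 0 ∧ m 0 = I - m 3 := by
  have e4 := hrec 1
  have e1 := hrec 3
  have e2 := hrec 4
  have e0 := hrec 0
  rw [show (1+3:ZMod 5) = 4 from by decide, show (1+1:ZMod 5) = 2 from by decide] at e4
  rw [show (3+3:ZMod 5) = 1 from by decide, show (3+1:ZMod 5) = 4 from by decide] at e1
  rw [show (4+3:ZMod 5) = 2 from by decide, show (4+1:ZMod 5) = 0 from by decide] at e2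
  rw [show (0+3:ZMod 5) = 3 from by decide, show (0+1:ZMod 5) = 1 from by decide] at e0
  have h4 : m 4 = 0 := by rw [e4, h]; ring
  have h1 : m 1 = I := by rw [e1, h4]; ring
  have h2 : m 2 = I := by rw [e2, h4]; ring
  refine ⟨h1, h2, h4, ?_⟩
  rw [h1] at e0
  have : m 3 = I - m 0 := by rw [e0]; ring_nf; rw [I_sq]; ring
  rw [this]; ring
end

section
/- The compatibility condition ∂A/∂t - ∂B/∂x + η[A, B] = 0 for the Lax pair A(x,t) = [[ν, 4(x-λ)],[x² + xλ + λ² + t/2, -ν]], B(x,t) = [[0, 2],[x/2 + λ, 0]] (with λ = λ(t), ν = ν(t)) holds identically in x if and only if dλ/dt = ην and dν/dt = η(6λ² + t), i.e. if and only if λ solves the Painlevé I equation λ'' = η²(6λ² + t). -/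
open Matrix Complex

/-- The compatibility condition `∂A/∂t - ∂B/∂x + η[A,B] = 0` (entrywise, for all `x`)
for the Painlevé I Lax pair
`A(x,t) = [[ν, 4(x-λ)],[x² + xλ + λ² + t/2, -ν]]`, `B(x,t) = [[0, 2],[x/2 + λ, 0]]`
holds iff `λ' = ην` and `ν' = η(6λ² + t)`, i.e. iff `λ` solves Painlevé I with large
parameter. -/
theorem lax_compatibility_iff_painleveI (η : ℂ) (hη : η ≠ 0) (l ν : ℂ → ℂ)
    (hl : Differentiable ℂ l) (hν : Differentiable ℂ ν)
    (A B : ℂ → ℂ → Matrix (Fin 2) (Fin 2) ℂ)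
    (hA : ∀ t x, A t x = !![ν t, 4 * (x - l t);
        x ^ 2 + x * l t + l t ^ 2 + t / 2, -ν t])
    (hB : ∀ t x, B t x = !![0, 2; x / 2 + l t, 0]) :
    (∀ t x (i j : Fin 2),
        deriv (fun s => A s x i j) t - deriv (fun y => B t y i j) x
          + η * ((A t x * B t x - B t x * A t x) i j) = 0)
      ↔ ((∀ t, deriv l t = η * ν t) ∧ (∀ t, deriv ν t = η * (6 * l t ^ 2 + t))) := by
  -- derivatives of entries of A in t
  have dA00 : ∀ t x, deriv (fun s => A s x 0 0) t = deriv ν t := by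
    intro t x
    have : (fun s => A s x 0 0) = ν := by funext s; rw [hA]; simp
    rw [this]
  have dA01 : ∀ t x, deriv (fun s => A s x 0 1) t = 4 * (0 - deriv l t) := by
    intro t x
    have : (fun s => A s x 0 1) = fun s => 4 * (x - l s) := by
      funext s; rw [hA]; simp
    rw [this]
    exact (((hasDerivAt_const t x).sub (hl t).hasDerivAt).const_mul 4).deriv
  have dA10 : ∀ t x, deriv (fun s => A s x 1 0) t
      = 0 + x * deriv l t + 2 * l t ^ 1 * deriv l t + 1 / 2 := by
    intro t x
    have : (fun s => A s x 1 0) = fun s => x ^ 2 + x * l s + l s ^ 2 + s / 2 := by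
      funext s; rw [hA]; simp
    rw [this]
    exact ((((hasDerivAt_const t (x ^ 2)).add ((hl t).hasDerivAt.const_mul x)).add
      ((hl t).hasDerivAt.pow 2)).add ((hasDerivAt_id t).div_const 2)).deriv
  have dA11 : ∀ t x, deriv (fun s => A s x 1 1) t = -deriv ν t := by
    intro t x
    have : (fun s => A s x 1 1) = fun s => -ν s := by funext s; rw [hA]; simp
    rw [this]
    exact ((hν t).hasDerivAt.neg).deriv
  -- derivatives of entries of B in x
  have dB00 : ∀ t x, deriv (fun y => B t y 0 0) x = 0 := by
    intro t x
    have : (fun y => B t y 0 0) = fun _ => (0 : ℂ) := by funext y; rw [hB]; simp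
    rw [this]; simp
  have dB01 : ∀ t x, deriv (fun y => B t y 0 1) x = 0 := by
    intro t x
    have : (fun y => B t y 0 1) = fun _ => (2 : ℂ) := by funext y; rw [hB]; simp
    rw [this]; simp
  have dB10 : ∀ t x, deriv (fun y => B t y 1 0) x = 1 / 2 := by
    intro t x
    have : (fun y => B t y 1 0) = fun y => y / 2 + l t := by funext y; rw [hB]; simp
    rw [this]
    have := (((hasDerivAt_id x).div_const 2).add_const (l t)).deriv
    simpa using this
  have dB11 : ∀ t x, deriv (fun y => B t y 1 1) x = 0 := by
    intro t x
    have : (fun y => B t y 1 1) = fun _ => (0 : ℂ) := by funext y; rw [hB]; simp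
    rw [this]; simp
  constructor
  · intro h
    have hl' : ∀ t, deriv l t = η * ν t := by
      intro t
      have h01 := h t 0 0 1
      rw [dA01, dB01, hA, hB] at h01
      simp [Matrix.mul_apply, Fin.sum_univ_two] at h01
      linear_combination (-1 / 4 : ℂ) * h01
    refine ⟨hl', fun t => ?_⟩
    have h00 := h t 0 0 0
    rw [dA00, dB00, hA, hB] at h00
    simp [Matrix.mul_apply, Fin.sum_univ_two] at h00
    linear_combination h00
  · rintro ⟨hl', hν'⟩ t x i j
    fin_cases i <;> fin_cases j <;>
      simp only [Fin.zero_eta, Fin.mk_one] <;>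
      [rw [dA00, dB00]; rw [dA01, dB01]; rw [dA10, dB10]; rw [dA11, dB11]] <;>
      rw [hA, hB] <;>
      simp [Matrix.mul_apply, Fin.sum_univ_two, hl', hν'] <;>
      ring_nf
end
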